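/- Let f be an FIF on SG with vertical scaling factors d₁,d₂,d₃ ∈ (−1,1). Then sup_m E_m(f) < ∞ if and only if either E₁(f) = E₀(f) or d₁² + d₂² + d₃² < 3/5. Moreover: if E₁(f) = E₀(f), then E_m(f) = E₀(f) for all m and f is harmonic; and if d₁² + d₂² + d₃² < 3/5, then lim_{m→∞} E_m(f) = E₀(f) + (E₁(f) − E₀(f)) / (1 − (5/3)(d₁² + d₂² + d₃²)). -/

import Mathlib

open Finset Filter

noncomputable section

/-- Points in the plane. -/
abbrev Pt := Fin 2 → ℝ

/-- The three contraction maps `P_i(x) = (x + q_i)/2`. -/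
def Pmap (q : Fin 3 → Pt) (i : Fin 3) (x : Pt) : Pt := (x + q i) / 2

/-- `Pw q m ω = P_{ω 0} ∘ P_{ω 1} ∘ ⋯ ∘ P_{ω (m-1)}` for a word `ω` of length `m`. -/
def Pw (q : Fin 3 → Pt) : (m : ℕ) → (Fin m → Fin 3) → Pt → Pt
  | 0, _, x => x
  | m + 1, ω, x => Pmap q (ω 0) (Pw q m (fun k => ω k.succ) x)

/-- The level-`m` vertex set `V_m`. -/
def V (q : Fin 3 → Pt) (m : ℕ) : Set Pt :=
  {x | ∃ ω : Fin m → Fin 3, ∃ i : Fin 3, x = Pw q m ω (q i)}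

/-- `V_* = ⋃ m, V_m`. -/
def Vstar (q : Fin 3 → Pt) : Set Pt := ⋃ m, V q m

/-- The Sierpinski gasket, as the closure of `V_*`. -/
def SG (q : Fin 3 → Pt) : Set Pt := closure (Vstar q)

/-- The level-`m` graph energy. -/
def energy (q : Fin 3 → Pt) (m : ℕ) (u : Pt → ℝ) : ℝ :=
  (5/3 : ℝ)^m * ∑ ω : Fin m → Fin 3,
    ∑ p ∈ Finset.univ.filter (fun p : Fin 3 × Fin 3 => p.1 < p.2),
      (u (Pw q m ω (q p.1)) - u (Pw q m ω (q p.2)))^2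

/-- The level-`m` bilinear graph energy. -/
def energyBil (q : Fin 3 → Pt) (m : ℕ) (u v : Pt → ℝ) : ℝ :=
  (5/3 : ℝ)^m * ∑ ω : Fin m → Fin 3,
    ∑ p ∈ Finset.univ.filter (fun p : Fin 3 × Fin 3 => p.1 < p.2),
      (u (Pw q m ω (q p.1)) - u (Pw q m ω (q p.2))) *
        (v (Pw q m ω (q p.1)) - v (Pw q m ω (q p.2)))

open scoped Classical in
/-- The level-`m` graph Laplacian at `x`. -/
def graphLap (q : Fin 3 → Pt) (m : ℕ) (u : Pt → ℝ) (x : Pt) : ℝ :=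
  ∑ ω : Fin m → Fin 3,
    ∑ p ∈ Finset.univ.filter (fun p : Fin 3 × Fin 3 => p.1 ≠ p.2 ∧ Pw q m ω (q p.1) = x),
      (u (Pw q m ω (q p.2)) - u x)

/-- A function is harmonic on `SG` if it is continuous on `SG` and satisfies
the `1/5-2/5` rule. -/
def IsHarmonic (q : Fin 3 → Pt) (h : Pt → ℝ) : Prop :=
  ContinuousOn h (SG q) ∧
  ∀ (m : ℕ) (ω : Fin m → Fin 3) (i j k : Fin 3), i ≠ j → j ≠ k → i ≠ k →
    h (Pw q m ω (Pmap q i (q j))) =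
      2/5 * h (Pw q m ω (q i)) + 2/5 * h (Pw q m ω (q j)) + 1/5 * h (Pw q m ω (q k))

/-- `f` is a fractal interpolation function on `SG` with vertical scaling factors `d i`. -/
def IsFIF (q : Fin 3 → Pt) (d : Fin 3 → ℝ) (f : Pt → ℝ) : Prop :=
  ContinuousOn f (SG q) ∧
  ∃ h : Fin 3 → Pt → ℝ, (∀ i, IsHarmonic q (h i)) ∧
    ∀ i, ∀ x ∈ SG q, f (Pmap q i x) = d i * f x + h i x


/-! On a single cell, the energy of the first refinement exceeds the energy of the cell by a
positive definite form in the deviations of the three midpoint values from the 1/5–2/5 rule,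
while the bilinear energy against a function obeying that rule does not change. Together with
self-similarity, `E_{m+1}(u) = (5/3) ∑ᵢ E_m(u ∘ Pᵢ)`, the FIF equation then yields the affine
recursion `E_{m+1}(f) = ρ E_m(f) + C` with `ρ = (5/3)(d₁² + d₂² + d₃²)`, so that
`E_{m+1}(f) - E_m(f) = ρ^m (E₁(f) - E₀(f))` with `E₁(f) ≥ E₀(f)`: the energies grow
geometrically, and they stay constant exactly when every midpoint deviation vanishes,
i.e. when `f` is harmonic. -/

section AffineRecursion

variable {e : ℕ → ℝ} {ρ C : ℝ}

lemma sub_eq_pow_mul_of_affine_rec (he : ∀ m, e (m + 1) = ρ * e m + C) (m : ℕ) :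
    e (m + 1) - e m = ρ ^ m * (e 1 - e 0) := by
  induction m with
  | zero => simp
  | succ n ih =>
    have hstep : e (n + 1 + 1) - e (n + 1) = ρ * (e (n + 1) - e n) := by
      rw [he (n + 1), he n]; ring
    rw [hstep, ih]; ring

lemma eq_add_geom_sum_mul_of_affine_rec (he : ∀ m, e (m + 1) = ρ * e m + C) (m : ℕ) :
    e m = e 0 + (∑ k ∈ range m, ρ ^ k) * (e 1 - e 0) := by
  induction m with
  | zero => simp
  | succ n ih =>
    rw [sum_range_succ, add_mul, ← sub_eq_pow_mul_of_affine_rec he n]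
    linarith

lemma eq_initial_of_affine_rec (he : ∀ m, e (m + 1) = ρ * e m + C) (h₁ : e 1 = e 0) (m : ℕ) :
    e m = e 0 := by
  simp [eq_add_geom_sum_mul_of_affine_rec he m, h₁]

lemma tendsto_of_affine_rec (he : ∀ m, e (m + 1) = ρ * e m + C) (hρ₀ : 0 ≤ ρ) (hρ₁ : ρ < 1) :
    Tendsto e atTop (nhds (e 0 + (e 1 - e 0) / (1 - ρ))) := by
  rw [div_eq_inv_mul]
  refine Tendsto.congr (fun m => (eq_add_geom_sum_mul_of_affine_rec he m).symm) ?_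
  exact ((hasSum_geometric_of_lt_one hρ₀ hρ₁).tendsto_sum_nat.mul_const _).const_add _

lemma tendsto_atTop_of_affine_rec (he : ∀ m, e (m + 1) = ρ * e m + C) (hρ : 1 ≤ ρ)
    (hlt : e 0 < e 1) : Tendsto e atTop atTop := by
  have hlin : ∀ m : ℕ, e 0 + m * (e 1 - e 0) ≤ e m := fun m => by
    rw [eq_add_geom_sum_mul_of_affine_rec he m]
    have hm : (m : ℝ) ≤ ∑ k ∈ range m, ρ ^ k := by
      simpa using sum_le_sum fun k (_ : k ∈ range m) => one_le_pow₀ hρ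
    gcongr
  refine tendsto_atTop_mono hlin (tendsto_atTop_add_const_left _ _ ?_)
  exact tendsto_natCast_atTop_atTop.atTop_mul_const (by linarith)

lemma bddAbove_range_iff_of_affine_rec (he : ∀ m, e (m + 1) = ρ * e m + C) (hρ : 0 ≤ ρ)
    (hle : e 0 ≤ e 1) : BddAbove (Set.range e) ↔ e 1 = e 0 ∨ ρ < 1 := by
  refine ⟨fun hbdd => ?_, ?_⟩
  · by_contra! h
    exact not_bddAbove_of_tendsto_atTop
      (tendsto_atTop_of_affine_rec he h.2 (lt_of_le_of_ne hle (Ne.symm h.1))) hbdd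
  · rintro (h₁ | hρ₁)
    · exact ⟨e 0, by rintro _ ⟨m, rfl⟩; exact (eq_initial_of_affine_rec he h₁ m).le⟩
    · exact (tendsto_of_affine_rec he hρ hρ₁).bddAbove_range

end AffineRecursion

section Words

variable (q : Fin 3 → Pt)

lemma Pmap_comm (i j : Fin 3) : Pmap q i (q j) = Pmap q j (q i) := by
  simp [Pmap, add_comm]

lemma Pmap_self (i : Fin 3) : Pmap q i (q i) = q i := by
  funext k; simp [Pmap]

lemma Pw_cons (m : ℕ) (i : Fin 3) (ω : Fin m → Fin 3) (x : Pt) :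
    Pw q (m + 1) (Fin.cons i ω) x = Pmap q i (Pw q m ω x) := by
  simp [Pw]

lemma Pw_snoc (m : ℕ) (ω : Fin m → Fin 3) (j : Fin 3) (x : Pt) :
    Pw q (m + 1) (Fin.snoc ω j) x = Pw q m ω (Pmap q j x) := by
  induction m with
  | zero => simp [Pw, Fin.snoc]
  | succ n ih =>
    have htail : (fun k : Fin (n + 1) => (Fin.snoc ω j : Fin (n + 2) → Fin 3) k.succ)
        = Fin.snoc (fun k : Fin n => ω k.succ) j := by
      funext k
      induction k using Fin.lastCases with
      | last => simp [Fin.succ_last]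
      | cast k => rw [Fin.succ_castSucc, Fin.snoc_castSucc, Fin.snoc_castSucc]
    change Pmap q _ (Pw q (n + 1) _ x) = Pmap q _ (Pw q n _ (Pmap q j x))
    rw [htail, ih]
    simp

lemma Pw_mem_SG (m : ℕ) (ω : Fin m → Fin 3) (i : Fin 3) : Pw q m ω (q i) ∈ SG q :=
  subset_closure (Set.mem_iUnion.2 ⟨m, ω, i, rfl⟩)

end Words

lemma sum_words_succ_eq_sum_cons (m : ℕ) (F : (Fin (m + 1) → Fin 3) → ℝ) :
    ∑ ω, F ω = ∑ i : Fin 3, ∑ ω : Fin m → Fin 3, F (Fin.cons i ω) := by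
  rw [← (Fin.consEquiv fun _ => Fin 3).sum_comp, Fintype.sum_prod_type]
  rfl

lemma sum_words_succ_eq_sum_snoc (m : ℕ) (F : (Fin (m + 1) → Fin 3) → ℝ) :
    ∑ ω, F ω = ∑ ω : Fin m → Fin 3, ∑ j : Fin 3, F (Fin.snoc ω j) := by
  rw [← (Fin.snocEquiv fun _ => Fin 3).sum_comp, Fintype.sum_prod_type, sum_comm]
  rfl

lemma sum_filter_lt_fin_three (g : Fin 3 × Fin 3 → ℝ) :
    ∑ p ∈ univ.filter (fun p : Fin 3 × Fin 3 => p.1 < p.2), g p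
      = g (0, 1) + g (0, 2) + g (1, 2) := by
  rw [show univ.filter (fun p : Fin 3 × Fin 3 => p.1 < p.2) = {(0, 1), (0, 2), (1, 2)} by decide,
    sum_insert (by decide), sum_insert (by decide), sum_singleton, add_assoc]

section Energy

variable (q : Fin 3 → Pt)

lemma energyBil_self (m : ℕ) (u : Pt → ℝ) : energyBil q m u u = energy q m u := by
  simp [energyBil, energy, sq]

lemma energyBil_zero (u v : Pt → ℝ) :
    energyBil q 0 u v = ∑ p ∈ univ.filter (fun p : Fin 3 × Fin 3 => p.1 < p.2),
      (u (q p.1) - u (q p.2)) * (v (q p.1) - v (q p.2)) := by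
  simp [energyBil, Pw]

lemma energyBil_one (u v : Pt → ℝ) :
    energyBil q 1 u v = 5 / 3 * ∑ j : Fin 3, ∑ p ∈ univ.filter (fun p : Fin 3 × Fin 3 => p.1 < p.2),
      (u (Pmap q j (q p.1)) - u (Pmap q j (q p.2))) *
        (v (Pmap q j (q p.1)) - v (Pmap q j (q p.2))) := by
  simp [energyBil, sum_words_succ_eq_sum_cons, Pw]

lemma energyBil_eq_sum_cells (m : ℕ) (u v : Pt → ℝ) :
    energyBil q m u v = (5 / 3) ^ m * ∑ ω, energyBil q 0 (u ∘ Pw q m ω) (v ∘ Pw q m ω) := by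
  simp only [energyBil_zero]
  rfl

lemma energyBil_succ_eq_sum_cells (m : ℕ) (u v : Pt → ℝ) :
    energyBil q (m + 1) u v = (5 / 3) ^ m * ∑ ω, energyBil q 1 (u ∘ Pw q m ω) (v ∘ Pw q m ω) := by
  rw [energyBil]
  simp only [energyBil_one, sum_words_succ_eq_sum_snoc, Pw_snoc, Function.comp_apply,
    mul_sum, pow_succ, mul_assoc]

lemma energyBil_succ_eq_sum_comp_Pmap (m : ℕ) (u v : Pt → ℝ) :
    energyBil q (m + 1) u v = 5 / 3 * ∑ i, energyBil q m (u ∘ Pmap q i) (v ∘ Pmap q i) := by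
  simp only [energyBil, sum_words_succ_eq_sum_cons, Pw_cons, Function.comp_apply, mul_sum,
    pow_succ', mul_assoc]

end Energy

section LevelOne

variable (q : Fin 3 → Pt)

def SatisfiesHarmonicRule (u : Pt → ℝ) : Prop :=
  ∀ i j k : Fin 3, i ≠ j → j ≠ k → i ≠ k →
    u (Pmap q i (q j)) = 2/5 * u (q i) + 2/5 * u (q j) + 1/5 * u (q k)

def midDefect (u : Pt → ℝ) (i j k : Fin 3) : ℝ :=
  u (Pmap q i (q j)) - (2 * u (q i) + 2 * u (q j) + u (q k)) / 5

lemma energy_one_eq (u : Pt → ℝ) :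
    energy q 1 u = energy q 0 u + 5 / 3 *
      (2 * (midDefect q u 0 1 2 ^ 2 + midDefect q u 0 2 1 ^ 2 + midDefect q u 1 2 0 ^ 2)
        + (midDefect q u 0 1 2 - midDefect q u 0 2 1) ^ 2
        + (midDefect q u 0 1 2 - midDefect q u 1 2 0) ^ 2
        + (midDefect q u 0 2 1 - midDefect q u 1 2 0) ^ 2) := by
  simp only [← energyBil_self, energyBil_one, energyBil_zero, Fin.sum_univ_three,
    sum_filter_lt_fin_three, Pmap_self, Pmap_comm q 1 0, Pmap_comm q 2 0, Pmap_comm q 2 1,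
    midDefect]
  ring

lemma energy_zero_le_energy_one (u : Pt → ℝ) : energy q 0 u ≤ energy q 1 u := by
  rw [energy_one_eq]
  exact le_add_of_nonneg_right (by positivity)

lemma satisfiesHarmonicRule_of_energy_one_eq {u : Pt → ℝ} (h : energy q 1 u = energy q 0 u) :
    SatisfiesHarmonicRule q u := by
  rw [energy_one_eq, add_eq_left] at h
  have h012 : midDefect q u 0 1 2 = 0 := by nlinarith
  have h021 : midDefect q u 0 2 1 = 0 := by nlinarith
  have h120 : midDefect q u 1 2 0 = 0 := by nlinarith
  simp only [midDefect] at h012 h021 h120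
  intro i j k hij hjk hik
  fin_cases i <;> fin_cases j <;> fin_cases k <;> simp at hij hjk hik ⊢ <;>
    first | linarith | (rw [Pmap_comm]; linarith)

lemma energyBil_one_of_satisfiesHarmonicRule (u : Pt → ℝ) {v : Pt → ℝ}
    (hv : SatisfiesHarmonicRule q v) : energyBil q 1 u v = energyBil q 0 u v := by
  simp only [energyBil_one, energyBil_zero, Fin.sum_univ_three, sum_filter_lt_fin_three, Pmap_self,
    Pmap_comm q 1 0, Pmap_comm q 2 0, Pmap_comm q 2 1, hv 0 1 2 (by decide) (by decide) (by decide),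
    hv 0 2 1 (by decide) (by decide) (by decide), hv 1 2 0 (by decide) (by decide) (by decide)]
  ring

end LevelOne

section Harmonic

variable (q : Fin 3 → Pt)

lemma energyBil_eq_energyBil_zero_of_isHarmonic (u : Pt → ℝ) {h : Pt → ℝ} (hh : IsHarmonic q h)
    (m : ℕ) : energyBil q m u h = energyBil q 0 u h := by
  induction m with
  | zero => rfl
  | succ m ih =>
    rw [← ih, energyBil_succ_eq_sum_cells, energyBil_eq_sum_cells q m]
    congr 1
    exact sum_congr rfl fun ω _ => energyBil_one_of_satisfiesHarmonicRule q _ (hh.2 m ω)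

lemma energy_eq_energy_zero_of_isHarmonic {h : Pt → ℝ} (hh : IsHarmonic q h) (m : ℕ) :
    energy q m h = energy q 0 h := by
  simpa only [energyBil_self] using energyBil_eq_energyBil_zero_of_isHarmonic q h hh m

lemma isHarmonic_of_energy_succ_eq {u : Pt → ℝ} (hu : ContinuousOn u (SG q))
    (he : ∀ m, energy q (m + 1) u = energy q m u) : IsHarmonic q u := by
  refine ⟨hu, fun m ω => satisfiesHarmonicRule_of_energy_one_eq q (u := u ∘ Pw q m ω) ?_⟩
  have hcells : ∑ ω, (energy q 1 (u ∘ Pw q m ω) - energy q 0 (u ∘ Pw q m ω)) = 0 := by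
    have hm := he m
    rw [← energyBil_self, ← energyBil_self, energyBil_succ_eq_sum_cells,
      energyBil_eq_sum_cells q m] at hm
    rw [sum_sub_distrib, sub_eq_zero]
    simpa only [energyBil_self] using mul_left_cancel₀ (by positivity) hm
  have hnonneg : ∀ ω' ∈ univ, 0 ≤ energy q 1 (u ∘ Pw q m ω') - energy q 0 (u ∘ Pw q m ω') :=
    fun ω' _ => sub_nonneg.2 (energy_zero_le_energy_one q _)
  exact sub_eq_zero.1 ((sum_eq_zero_iff_of_nonneg hnonneg).1 hcells ω (mem_univ ω))

end Harmonic

section FIF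

variable {q : Fin 3 → Pt}

lemma energy_congr {u u' : Pt → ℝ} (hu : Set.EqOn u u' (SG q)) (m : ℕ) :
    energy q m u = energy q m u' := by
  unfold energy
  congr 1
  refine sum_congr rfl fun ω _ => sum_congr rfl fun p _ => ?_
  rw [hu (Pw_mem_SG q m ω p.1), hu (Pw_mem_SG q m ω p.2)]

lemma energy_smul_add (a : ℝ) (u w : Pt → ℝ) (m : ℕ) :
    energy q m (fun x => a * u x + w x)
      = a ^ 2 * energy q m u + 2 * a * energyBil q m u w + energy q m w := by
  simp only [energy, energyBil, mul_sum, ← sum_add_distrib]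
  refine sum_congr rfl fun ω _ => sum_congr rfl fun p _ => ?_
  ring

lemma IsFIF.exists_energy_succ_eq {d : Fin 3 → ℝ} {f : Pt → ℝ} (hf : IsFIF q d f) :
    ∃ C, ∀ m,
      energy q (m + 1) f = 5 / 3 * ((d 0) ^ 2 + (d 1) ^ 2 + (d 2) ^ 2) * energy q m f + C := by
  obtain ⟨-, h, hh, hfh⟩ := hf
  refine ⟨5 / 3 * ∑ i, (2 * d i * energyBil q 0 f (h i) + energy q 0 (h i)), fun m => ?_⟩
  have hcell : ∀ i, energy q m (f ∘ Pmap q i)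
      = d i ^ 2 * energy q m f + 2 * d i * energyBil q 0 f (h i) + energy q 0 (h i) := fun i => by
    rw [energy_congr (u := f ∘ Pmap q i) (hfh i) m, energy_smul_add,
      energyBil_eq_energyBil_zero_of_isHarmonic q f (hh i),
      energy_eq_energy_zero_of_isHarmonic q (hh i)]
  rw [← energyBil_self, energyBil_succ_eq_sum_comp_Pmap]
  simp only [energyBil_self, hcell, Fin.sum_univ_three]
  ring

end FIF

theorem stmt_4_general (q : Fin 3 → Pt) (d : Fin 3 → ℝ) (f : Pt → ℝ) (hf : IsFIF q d f) :
    (BddAbove (Set.range fun m => energy q m f) ↔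
      energy q 1 f = energy q 0 f ∨ (d 0)^2 + (d 1)^2 + (d 2)^2 < 3/5) ∧
    (energy q 1 f = energy q 0 f →
      (∀ m : ℕ, energy q m f = energy q 0 f) ∧ IsHarmonic q f) ∧
    ((d 0)^2 + (d 1)^2 + (d 2)^2 < 3/5 →
      Filter.Tendsto (fun m => energy q m f) Filter.atTop
        (nhds (energy q 0 f +
          (energy q 1 f - energy q 0 f) / (1 - (5/3) * ((d 0)^2 + (d 1)^2 + (d 2)^2))))) := by
  obtain ⟨C, hrec⟩ := hf.exists_energy_succ_eq
  have hρ : 0 ≤ 5 / 3 * ((d 0) ^ 2 + (d 1) ^ 2 + (d 2) ^ 2) := by positivity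
  have hρ_lt_one : 5 / 3 * ((d 0) ^ 2 + (d 1) ^ 2 + (d 2) ^ 2) < 1 ↔
      (d 0) ^ 2 + (d 1) ^ 2 + (d 2) ^ 2 < 3 / 5 := by
    constructor <;> intro h <;> linarith
  refine ⟨?_, fun h₁ => ?_, fun hd => tendsto_of_affine_rec hrec hρ (hρ_lt_one.2 hd)⟩
  · rw [bddAbove_range_iff_of_affine_rec hrec hρ (energy_zero_le_energy_one q f), hρ_lt_one]
  · have hconst := eq_initial_of_affine_rec (e := fun m => energy q m f) hrec h₁
    exact ⟨hconst, isHarmonic_of_energy_succ_eq q hf.1 fun m => (hconst _).trans (hconst m).symm⟩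

/-- characterization of finiteness of the energy of an FIF. -/
theorem stmt_4 (q : Fin 3 → Pt) (hq : AffineIndependent ℝ q)
    (d : Fin 3 → ℝ) (hd : ∀ i, d i ∈ Set.Ioo (-1 : ℝ) 1)
    (f : Pt → ℝ) (hf : IsFIF q d f) :
    (BddAbove (Set.range fun m => energy q m f) ↔
      energy q 1 f = energy q 0 f ∨ (d 0)^2 + (d 1)^2 + (d 2)^2 < 3/5) ∧
    (energy q 1 f = energy q 0 f →
      (∀ m : ℕ, energy q m f = energy q 0 f) ∧ IsHarmonic q f) ∧
    ((d 0)^2 + (d 1)^2 + (d 2)^2 < 3/5 →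
      Filter.Tendsto (fun m => energy q m f) Filter.atTop
        (nhds (energy q 0 f +
          (energy q 1 f - energy q 0 f) / (1 - (5/3) * ((d 0)^2 + (d 1)^2 + (d 2)^2))))) :=
  stmt_4_general q d f hf
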